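/- Let X be a Banach space, m a positive integer, Γ an m × m positive definite real matrix, y ∈ ℝ^m fixed, and Φ(u) = (1/2)‖Γ^{-1/2}(𝒢(u) − y)‖₂². Suppose 𝒢 : X → ℝ^m satisfies: (a) for every ε > 0 there is M(ε) ∈ ℝ with ‖𝒢(u)‖₂ ≤ exp(ε‖u‖_X + M) for all u ∈ X; (b) for every ε > 0 there is K(ε) > 0 with ‖𝒢(u₁) − 𝒢(u₂)‖₂ ≤ K exp(ε max(‖u₁‖_X, ‖u₂‖_X))‖u₁ − u₂‖_X for all u₁, u₂ ∈ X. Let P : X → X be a bounded linear operator with ‖Pu‖_X ≤ C₀‖u‖_X for all u. Then for every ε > 0 there exists a constant C(ε) > 0 such that |Φ(u) − Φ(Pu)| ≤ C exp(ε‖u‖_X) ‖u − Pu‖_X for all u ∈ X. -/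

import Mathlib

open MeasureTheory Matrix

/-- The Euclidean norm on `ℝ^m`. -/
noncomputable def euclNorm {m : ℕ} (v : Fin m → ℝ) : ℝ :=
  Real.sqrt (∑ i, (v i) ^ 2)

/-- The weighted norm `‖v‖_Γ = ‖Γ^{-1/2} v‖₂` induced by a positive definite matrix `Γ`,
where `Γ^{-1/2}` is the inverse of the positive definite square root of `Γ`. -/
noncomputable def gammaNorm {m : ℕ} (Γ : Matrix (Fin m) (Fin m) ℝ) (hΓ : Γ.PosDef)
    (v : Fin m → ℝ) : ℝ :=
  euclNorm (((hΓ.posSemidef.1.eigenvectorUnitary : Matrix (Fin m) (Fin m) ℝ) *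
    diagonal (Real.sqrt ∘ hΓ.posSemidef.1.eigenvalues) *
    (star hΓ.posSemidef.1.eigenvectorUnitary : Matrix (Fin m) (Fin m) ℝ))⁻¹ *ᵥ v)

/-!
Writing `Φ(u) = ½‖H u‖²` with `H u = Γ^{-1/2}(𝒢 u - y)`, the difference of squares gives
`|Φ u - Φ (P u)| ≤ ‖H u - H (P u)‖ · max ‖H u‖ ‖H (P u)‖`. Both factors are controlled at the
scale `δ = ε / (2 max C₀ 1)`, chosen so that `δ · max ‖u‖ ‖P u‖ ≤ ε‖u‖ / 2`; the two
exponentials `exp (ε‖u‖ / 2)` then multiply to `exp (ε‖u‖)`.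
-/

open Real

section ExpBounds

variable {X F F' : Type*} [SeminormedAddCommGroup X] [SeminormedAddCommGroup F]
  [SeminormedAddCommGroup F'] [NormedSpace ℝ F] [NormedSpace ℝ F']

def ExpGrowth (H : X → F) : Prop :=
  ∀ ε > (0 : ℝ), ∃ B ≥ (0 : ℝ), ∀ u, ‖H u‖ ≤ B * exp (ε * ‖u‖)

def ExpLipschitz (H : X → F) : Prop :=
  ∀ ε > (0 : ℝ), ∃ K ≥ (0 : ℝ), ∀ u₁ u₂,
    ‖H u₁ - H u₂‖ ≤ K * exp (ε * max ‖u₁‖ ‖u₂‖) * ‖u₁ - u₂‖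

theorem ExpGrowth.comp_sub_const {g : X → F} (hg : ExpGrowth g) (L : F →L[ℝ] F') (y : F) :
    ExpGrowth fun u ↦ L (g u - y) := by
  intro ε hε
  obtain ⟨B, hB, hgB⟩ := hg ε hε
  refine ⟨‖L‖ * (B + ‖y‖), by positivity, fun u ↦ ?_⟩
  have hexp : 1 ≤ exp (ε * ‖u‖) := one_le_exp (by positivity)
  calc ‖L (g u - y)‖ ≤ ‖L‖ * (‖g u‖ + ‖y‖) := L.le_opNorm_of_le (norm_sub_le _ _)
    _ ≤ ‖L‖ * (B * exp (ε * ‖u‖) + ‖y‖ * exp (ε * ‖u‖)) := by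
        gcongr
        · exact hgB u
        · exact le_mul_of_one_le_right (norm_nonneg y) hexp
    _ = ‖L‖ * (B + ‖y‖) * exp (ε * ‖u‖) := by ring

theorem ExpLipschitz.comp_sub_const {g : X → F} (hg : ExpLipschitz g) (L : F →L[ℝ] F')
    (y : F) : ExpLipschitz fun u ↦ L (g u - y) := by
  intro ε hε
  obtain ⟨K, hK, hgK⟩ := hg ε hε
  refine ⟨‖L‖ * K, by positivity, fun u₁ u₂ ↦ ?_⟩
  calc ‖L (g u₁ - y) - L (g u₂ - y)‖ = ‖L (g u₁ - g u₂)‖ := by simp [← map_sub]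
    _ ≤ ‖L‖ * (K * exp (ε * max ‖u₁‖ ‖u₂‖) * ‖u₁ - u₂‖) := L.le_opNorm_of_le (hgK u₁ u₂)
    _ = ‖L‖ * K * exp (ε * max ‖u₁‖ ‖u₂‖) * ‖u₁ - u₂‖ := by ring

end ExpBounds

theorem abs_half_norm_sq_sub_le {F : Type*} [SeminormedAddCommGroup F] (a b : F) :
    |1 / 2 * ‖a‖ ^ 2 - 1 / 2 * ‖b‖ ^ 2| ≤ ‖a - b‖ * max ‖a‖ ‖b‖ := by
  have hfactor : 1 / 2 * ‖a‖ ^ 2 - 1 / 2 * ‖b‖ ^ 2 = (‖a‖ - ‖b‖) * ((‖a‖ + ‖b‖) / 2) := by ring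
  have hmean : (‖a‖ + ‖b‖) / 2 ≤ max ‖a‖ ‖b‖ := by
    linarith [le_max_left ‖a‖ ‖b‖, le_max_right ‖a‖ ‖b‖]
  rw [hfactor, abs_mul, abs_of_nonneg (by positivity : 0 ≤ (‖a‖ + ‖b‖) / 2)]
  exact mul_le_mul (abs_norm_sub_norm_le a b) hmean (by positivity) (norm_nonneg _)

theorem div_mul_max_le_of_le_mul {ε a b c : ℝ} (hε : 0 ≤ ε) (ha : 0 ≤ a) (hb : b ≤ c * a) :
    ε / (2 * max c 1) * max a b ≤ ε / 2 * a := by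
  have hc : 0 < max c 1 := lt_max_of_lt_right one_pos
  have hmax : max a b ≤ max c 1 * a :=
    max_le (le_mul_of_one_le_left ha (le_max_right c 1))
      (hb.trans (mul_le_mul_of_nonneg_right (le_max_left c 1) ha))
  calc ε / (2 * max c 1) * max a b ≤ ε / (2 * max c 1) * (max c 1 * a) := by gcongr
    _ = ε / 2 * a := by field_simp

theorem exists_abs_half_norm_sq_sub_comp_le {X F : Type*} [SeminormedAddCommGroup X]
    [SeminormedAddCommGroup F] {H : X → F} (hgrowth : ExpGrowth H) (hlip : ExpLipschitz H)
    (P : X → X) (C₀ : ℝ) (hP : ∀ u, ‖P u‖ ≤ C₀ * ‖u‖) :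
    ∀ ε > (0 : ℝ), ∃ C > (0 : ℝ), ∀ u,
      |1 / 2 * ‖H u‖ ^ 2 - 1 / 2 * ‖H (P u)‖ ^ 2| ≤ C * exp (ε * ‖u‖) * ‖u - P u‖ := by
  intro ε hε
  set δ := ε / (2 * max C₀ 1)
  have hδ : 0 < δ := by positivity
  obtain ⟨B, hB, hHB⟩ := hgrowth δ hδ
  obtain ⟨K, hK, hHK⟩ := hlip δ hδ
  refine ⟨B * K + 1, by positivity, fun u ↦ ?_⟩
  set E := exp (ε / 2 * ‖u‖)
  have hscale : exp (δ * max ‖u‖ ‖P u‖) ≤ E :=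
    exp_le_exp.2 (div_mul_max_le_of_le_mul hε.le (norm_nonneg u) (hP u))
  have hgrowth_at {w : X} (hw : ‖w‖ ≤ max ‖u‖ ‖P u‖) : ‖H w‖ ≤ B * E :=
    (hHB w).trans (mul_le_mul_of_nonneg_left ((exp_le_exp.2 (by gcongr)).trans hscale) hB)
  calc |1 / 2 * ‖H u‖ ^ 2 - 1 / 2 * ‖H (P u)‖ ^ 2|
      ≤ ‖H u - H (P u)‖ * max ‖H u‖ ‖H (P u)‖ := abs_half_norm_sq_sub_le _ _
    _ ≤ (K * E * ‖u - P u‖) * (B * E) := by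
        gcongr
        · exact (hHK u (P u)).trans (by gcongr)
        · exact max_le (hgrowth_at (le_max_left _ _)) (hgrowth_at (le_max_right _ _))
    _ = B * K * exp (ε * ‖u‖) * ‖u - P u‖ := by
        rw [show ε * ‖u‖ = ε / 2 * ‖u‖ + ε / 2 * ‖u‖ by ring, exp_add]
        ring
    _ ≤ (B * K + 1) * exp (ε * ‖u‖) * ‖u - P u‖ := by gcongr; linarith

theorem euclNorm_eq_norm_toLp {m : ℕ} (v : Fin m → ℝ) :
    euclNorm v = ‖WithLp.toLp 2 v‖ := by
  simp [euclNorm, EuclideanSpace.norm_eq]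

theorem exists_gammaNorm_eq_norm {m : ℕ} (Γ : Matrix (Fin m) (Fin m) ℝ) (hΓ : Γ.PosDef) :
    ∃ L : EuclideanSpace ℝ (Fin m) →L[ℝ] EuclideanSpace ℝ (Fin m),
      ∀ v, gammaNorm Γ hΓ v = ‖L (WithLp.toLp 2 v)‖ :=
  ⟨toEuclideanCLM (𝕜 := ℝ) _, fun v ↦ by
    rw [gammaNorm, euclNorm_eq_norm_toLp, toEuclideanCLM_toLp]⟩

theorem discretized_potential_error_general
    {X : Type*} [NormedAddCommGroup X] [NormedSpace ℝ X]
    (m : ℕ)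
    (Γ : Matrix (Fin m) (Fin m) ℝ) (hΓ : Γ.PosDef)
    (y : Fin m → ℝ) (G : X → Fin m → ℝ)
    (ha : ∀ ε > (0 : ℝ), ∃ M : ℝ, ∀ u : X,
      euclNorm (G u) ≤ Real.exp (ε * ‖u‖ + M))
    (hb : ∀ ε > (0 : ℝ), ∃ K > (0 : ℝ), ∀ u₁ u₂ : X,
      euclNorm (G u₁ - G u₂) ≤
        K * Real.exp (ε * max ‖u₁‖ ‖u₂‖) * ‖u₁ - u₂‖)
    (P : X →L[ℝ] X) (C₀ : ℝ) (hP : ∀ u : X, ‖P u‖ ≤ C₀ * ‖u‖) :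
    ∀ ε > (0 : ℝ), ∃ C > (0 : ℝ), ∀ u : X,
      |(1 / 2) * (gammaNorm Γ hΓ (G u - y)) ^ 2 -
        (1 / 2) * (gammaNorm Γ hΓ (G (P u) - y)) ^ 2| ≤
        C * Real.exp (ε * ‖u‖) * ‖u - P u‖ := by
  obtain ⟨L, hL⟩ := exists_gammaNorm_eq_norm Γ hΓ
  have hgrowth : ExpGrowth fun u ↦ WithLp.toLp 2 (G u) := fun ε hε ↦ by
    obtain ⟨M, hM⟩ := ha ε hε
    refine ⟨exp M, (exp_pos M).le, fun u ↦ ?_⟩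
    rw [← euclNorm_eq_norm_toLp, mul_comm, ← exp_add]
    exact hM u
  have hlip : ExpLipschitz fun u ↦ WithLp.toLp 2 (G u) := fun ε hε ↦ by
    obtain ⟨K, hK, hGK⟩ := hb ε hε
    exact ⟨K, hK.le, fun u₁ u₂ ↦ by simpa [euclNorm_eq_norm_toLp] using hGK u₁ u₂⟩
  simpa [hL] using exists_abs_half_norm_sq_sub_comp_le
    (hgrowth.comp_sub_const L (WithLp.toLp 2 y)) (hlip.comp_sub_const L (WithLp.toLp 2 y)) P C₀ hP

/-- Error estimate for the discretized Gaussian likelihood potential: if the forward map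
`𝒢` is exponentially bounded and locally Lipschitz with exponential factor for every
`ε > 0`, and `P` is a bounded linear operator on `X`, then for every `ε > 0` there is
`C(ε) > 0` with `|Φ(u) − Φ(Pu)| ≤ C exp(ε‖u‖) ‖u − Pu‖` for all `u`, where
`Φ(u) = ½‖Γ^{-1/2}(𝒢(u) − y)‖₂²`. -/
theorem discretized_potential_error
    {X : Type*} [NormedAddCommGroup X] [NormedSpace ℝ X] [CompleteSpace X]
    (m : ℕ) (hm : 0 < m)
    (Γ : Matrix (Fin m) (Fin m) ℝ) (hΓ : Γ.PosDef)
    (y : Fin m → ℝ) (G : X → Fin m → ℝ)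
    (ha : ∀ ε > (0 : ℝ), ∃ M : ℝ, ∀ u : X,
      euclNorm (G u) ≤ Real.exp (ε * ‖u‖ + M))
    (hb : ∀ ε > (0 : ℝ), ∃ K > (0 : ℝ), ∀ u₁ u₂ : X,
      euclNorm (G u₁ - G u₂) ≤
        K * Real.exp (ε * max ‖u₁‖ ‖u₂‖) * ‖u₁ - u₂‖)
    (P : X →L[ℝ] X) (C₀ : ℝ) (hP : ∀ u : X, ‖P u‖ ≤ C₀ * ‖u‖) :
    ∀ ε > (0 : ℝ), ∃ C > (0 : ℝ), ∀ u : X,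
      |(1 / 2) * (gammaNorm Γ hΓ (G u - y)) ^ 2 -
        (1 / 2) * (gammaNorm Γ hΓ (G (P u) - y)) ^ 2| ≤
        C * Real.exp (ε * ‖u‖) * ‖u - P u‖ :=
  discretized_potential_error_general m Γ hΓ y G ha hb P C₀ hP
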